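/- Let 𝒴 be an almost disjoint family of convergent sequences in a countable space ⟨ω, τ⟩, of cardinality less than 𝔟, such that each Y ∈ 𝒴 converges to a unique point of ω, and suppose the space has a point-separating countable family of clopen sets. Then there exists a family {Cₙ : n ∈ ω} of pairwise disjoint subsets of ω such that Y ⊆* Cₙ for every Y ∈ 𝒴 converging to n. -/
import Mathlib

open Filter Set

/-- `f ≤* g`: eventual domination. -/
def EvLE (f g : ℕ → ℕ) : Prop := ∀ᶠ n in Filter.atTop, f n ≤ g n

/-- The bounding number `𝔟`. -/
noncomputable def bNumber : Cardinal :=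
  sInf { c | ∃ F : Set (ℕ → ℕ), Cardinal.mk F = c ∧ ¬ ∃ g : ℕ → ℕ, ∀ f ∈ F, EvLE f g }

variable {X : Type} [TopologicalSpace X]

/-- `S` is an infinite set ("sequence") in `X \ {x}` converging to `x`. -/
def ConvergesTo (S : Set X) (x : X) : Prop :=
  S.Infinite ∧ x ∉ S ∧ ∀ U ∈ nhds x, (S \ U).Finite

/-- Separation of an almost disjoint family of convergent sequences by
pairwise disjoint sets according to their limits. -/
theorem exists_disjoint_almost_covers [Countable X]
    (𝒴 : Set (Set X))
    (hAD : ∀ Y ∈ 𝒴, ∀ Z ∈ 𝒴, Y ≠ Z → (Y ∩ Z).Finite)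
    (hcard : Cardinal.mk 𝒴 < bNumber)
    (hconv : ∀ Y ∈ 𝒴, ∃! x : X, ConvergesTo Y x)
    (hclopen : ∃ O : Set (Set X), O.Countable ∧ (∀ U ∈ O, IsClopen U) ∧
      ∀ x k : X, x ≠ k → ∃ U ∈ O, k ∈ U ∧ x ∉ U) :
    ∃ C : X → Set X, Pairwise (Function.onFun Disjoint C) ∧
      ∀ Y ∈ 𝒴, ∀ x : X, ConvergesTo Y x → (Y \ C x).Finite := by
  classical
  obtain ⟨O, hOc, hOcl, hOsep⟩ := hclopen
  -- enumerate the clopen family (adding `univ` to ensure nonemptiness)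
  obtain ⟨u, hu⟩ := (hOc.insert univ).exists_eq_range (insert_nonempty _ _)
  have hucl : ∀ j, IsClopen (u j) := by
    intro j
    have hj : u j ∈ insert (univ : Set X) O := hu ▸ mem_range_self j
    rcases hj with h | h
    · rw [h]; exact isClopen_univ
    · exact hOcl _ h
  -- injective enumeration of the space
  obtain ⟨ι, hι⟩ := exists_injective_nat X
  -- the (unique) limit of each member of 𝒴
  have limspec : ∀ Y : 𝒴, ConvergesTo (Y : Set X) (hconv Y Y.2).choose ∧
      ∀ y, ConvergesTo (Y : Set X) y → y = (hconv Y Y.2).choose :=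
    fun Y => (hconv Y Y.2).choose_spec
  set lim : 𝒴 → X := fun Y => (hconv Y Y.2).choose with hlim
  -- points of Y disagreeing with the limit on u i form a finite set
  have hD : ∀ (Y : 𝒴) (i : ℕ),
      {y | y ∈ (Y : Set X) ∧ ¬ ((y ∈ u i) ↔ (lim Y ∈ u i))}.Finite := by
    intro Y i
    by_cases hx : lim Y ∈ u i
    · have h1 : ((Y : Set X) \ u i).Finite :=
        (limspec Y).1.2.2 (u i) ((hucl i).isOpen.mem_nhds hx)
      refine h1.subset fun y hy => ⟨hy.1, fun hyu => hy.2 (iff_of_true hyu hx)⟩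
    · have h1 : ((Y : Set X) \ (u i)ᶜ).Finite :=
        (limspec Y).1.2.2 (u i)ᶜ ((hucl i).compl.isOpen.mem_nhds hx)
      refine h1.subset fun y hy => ⟨hy.1, fun hyu => hy.2 (iff_of_false (by simpa using hyu) hx)⟩
  have hF : ∀ (Y : 𝒴) (j : ℕ),
      {y | y ∈ (Y : Set X) ∧ ∃ i ≤ j, ¬ ((y ∈ u i) ↔ (lim Y ∈ u i))}.Finite := by
    intro Y j
    have hsub : {y | y ∈ (Y : Set X) ∧ ∃ i ≤ j, ¬ ((y ∈ u i) ↔ (lim Y ∈ u i))} ⊆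
        ⋃ i ∈ Finset.range (j + 1),
          {y | y ∈ (Y : Set X) ∧ ¬ ((y ∈ u i) ↔ (lim Y ∈ u i))} := by
      rintro y ⟨hyY, i, hij, hi⟩
      exact Set.mem_biUnion (Finset.mem_range.2 (by omega)) ⟨hyY, hi⟩
    exact ((Finset.range (j + 1)).finite_toSet.biUnion fun i _ => hD Y i).subset hsub
  -- the functions to be dominated
  set fY : 𝒴 → ℕ → ℕ := fun Y j => ((hF Y j).toFinset.sup ι) + 1 with hfY
  have hfY_spec : ∀ (Y : 𝒴) (j : ℕ) (y : X), y ∈ (Y : Set X) → fY Y j ≤ ι y →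
      ∀ i ≤ j, ((y ∈ u i) ↔ (lim Y ∈ u i)) := by
    intro Y j y hyY hle i hij
    by_contra hcon
    have hmem : y ∈ (hF Y j).toFinset := (hF Y j).mem_toFinset.2 ⟨hyY, i, hij, hcon⟩
    have h1 := Finset.le_sup (f := ι) hmem
    have h2 : ((hF Y j).toFinset.sup ι) + 1 ≤ ι y := hle
    omega
  have hfY_mono : ∀ (Y : 𝒴) {j j' : ℕ}, j ≤ j' → fY Y j ≤ fY Y j' := by
    intro Y j j' hjj
    have hsub : (hF Y j).toFinset ⊆ (hF Y j').toFinset := by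
      intro y hy
      rw [Set.Finite.mem_toFinset] at hy ⊢
      exact ⟨hy.1, hy.2.choose, le_trans hy.2.choose_spec.1 hjj, hy.2.choose_spec.2⟩
    exact Nat.succ_le_succ (Finset.sup_mono hsub)
  -- find a dominating function g
  obtain ⟨g, hg⟩ : ∃ g : ℕ → ℕ, ∀ Y : 𝒴, EvLE (fY Y) g := by
    by_contra hcon
    push_neg at hcon
    have hmem : Cardinal.mk (Set.range fY) ∈
        {c | ∃ F : Set (ℕ → ℕ), Cardinal.mk F = c ∧ ¬ ∃ g : ℕ → ℕ, ∀ f ∈ F, EvLE f g} := by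
      refine ⟨Set.range fY, rfl, ?_⟩
      rintro ⟨g, hgall⟩
      obtain ⟨Y, hY⟩ := hcon g
      exact hY (hgall (fY Y) (mem_range_self Y))
    have h1 : bNumber ≤ Cardinal.mk (Set.range fY) := csInf_le (OrderBot.bddBelow _) hmem
    have h2 : Cardinal.mk (Set.range fY) ≤ Cardinal.mk 𝒴 := Cardinal.mk_range_le
    exact absurd hcard (not_lt.2 (h1.trans h2))
  -- strictly increasing majorant
  set G : ℕ → ℕ := fun j => Nat.rec 0 (fun j' Gj => max Gj (g j') + 1) j with hG
  have hG0 : G 0 = 0 := rfl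
  have hGsucc : ∀ j, G (j + 1) = max (G j) (g j) + 1 := fun j => rfl
  have hGmono : Monotone G := by
    apply monotone_nat_of_le_succ
    intro j
    rw [hGsucc]
    omega
  have hGg : ∀ j, g j < G (j + 1) := by
    intro j; rw [hGsucc]; omega
  have hGj : ∀ j, j ≤ G j := by
    intro j
    induction j with
    | zero => omega
    | succ j ih => rw [hGsucc]; omega
  -- the "level" of a point
  set k : X → ℕ := fun m => Nat.findGreatest (fun j => G (j + 1) ≤ ι m) (ι m) with hk
  have hk_ge : ∀ (m : X) (j : ℕ), G (j + 1) ≤ ι m → j ≤ k m := by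
    intro m j hj
    exact Nat.le_findGreatest (le_trans (le_trans (hGj j) (hGmono (Nat.le_succ j))) hj) hj
  have hk_spec : ∀ m : X, 0 < k m → G (k m + 1) ≤ ι m := by
    intro m hpos
    have hne : Nat.findGreatest (fun j => G (j + 1) ≤ ι m) (ι m) ≠ 0 :=
      Nat.pos_iff_ne_zero.1 hpos
    obtain ⟨n, hn1, hn2, hn3⟩ : ∃ n, 0 < n ∧ n ≤ ι m ∧ G (n + 1) ≤ ι m := by
      by_contra hc
      push_neg at hc
      exact hne (Nat.findGreatest_eq_zero_iff.2 fun n h1 h2 hP =>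
        absurd hP (not_le.2 (hc n h1 h2)))
    exact Nat.findGreatest_spec (P := fun j => G (j + 1) ≤ ι m) hn2 hn3
  -- separating indices
  have hsep : ∀ a b : X, a ≠ b → ∃ j, b ∈ u j ∧ a ∉ u j := by
    intro a b hab
    obtain ⟨U, hUO, hbU, haU⟩ := hOsep a b hab
    have hUr : U ∈ range u := hu ▸ mem_insert_of_mem _ hUO
    obtain ⟨j, hj⟩ := hUr
    exact ⟨j, hj ▸ hbU, hj ▸ haU⟩
  set sep : X → X → ℕ := fun a b => if h : a ≠ b then (hsep a b h).choose else 0 with hsepdef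
  have hsep_spec : ∀ a b : X, a ≠ b → b ∈ u (sep a b) ∧ a ∉ u (sep a b) := by
    intro a b hab
    simp only [hsepdef, dif_pos hab]
    exact (hsep a b hab).choose_spec
  -- bound on separating indices from earlier points
  have hfin : ∀ x : X, {x' : X | ι x' < ι x}.Finite := fun x =>
    (Set.finite_Iio (ι x)).preimage hι.injOn
  set s : X → ℕ := fun x => (hfin x).toFinset.sup (fun x' => sep x' x) with hs
  have hs_spec : ∀ x x' : X, ι x' < ι x → sep x' x ≤ s x := by
    intro x x' hlt
    exact Finset.le_sup (f := fun x' => sep x' x) ((hfin x).mem_toFinset.2 hlt)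
  -- the separating family
  refine ⟨fun x => {m | s x ≤ k m ∧ ∀ i ≤ k m, ((m ∈ u i) ↔ (x ∈ u i))}, ?_, ?_⟩
  · -- pairwise disjointness
    have key : ∀ x x' : X, ι x' < ι x → ∀ m : X,
        m ∈ {m | s x ≤ k m ∧ ∀ i ≤ k m, ((m ∈ u i) ↔ (x ∈ u i))} →
        m ∉ {m | s x' ≤ k m ∧ ∀ i ≤ k m, ((m ∈ u i) ↔ (x' ∈ u i))} := by
      intro x x' hlt m hm hm'
      have hne : x' ≠ x := fun h => by rw [h] at hlt; omega
      obtain ⟨hj1, hj2⟩ := hsep_spec x' x hne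
      have hjk : sep x' x ≤ k m := le_trans (hs_spec x x' hlt) hm.1
      have h1 : m ∈ u (sep x' x) := (hm.2 _ hjk).2 hj1
      have h2 : x' ∈ u (sep x' x) := (hm'.2 _ hjk).1 h1
      exact hj2 h2
    intro x x' hne
    have hιne : ι x ≠ ι x' := fun h => hne (hι h)
    rcases lt_or_gt_of_ne hιne with h | h
    · exact Set.disjoint_left.2 fun m hm hm' => key x' x h m hm' hm
    · exact Set.disjoint_left.2 fun m hm hm' => key x x' h m hm hm'
  · -- almost containment
    intro Y hY x hx
    set Ys : 𝒴 := ⟨Y, hY⟩ with hYs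
    have hxl : x = lim Ys := (limspec Ys).2 x hx
    obtain ⟨J, hJ⟩ := (eventually_atTop).1 (hg Ys)
    set N : ℕ := max (G (s x + 1)) (max (fY Ys J) (g J)) with hN
    have hmain : ∀ y ∈ Y, N ≤ ι y →
        y ∈ {m | s x ≤ k m ∧ ∀ i ≤ k m, ((m ∈ u i) ↔ (x ∈ u i))} := by
      intro y hyY hNy
      have hGs : G (s x + 1) ≤ ι y := le_trans (le_max_left _ _) hNy
      have hks : s x ≤ k y := hk_ge y (s x) hGs
      refine ⟨hks, ?_⟩
      have hagree : fY Ys (k y) ≤ ι y := by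
        by_cases hcase : k y ≤ J
        · exact le_trans (hfY_mono Ys hcase) (le_trans (le_trans (le_max_left _ _)
            (le_max_right _ _)) hNy)
        · push_neg at hcase
          have hpos : 0 < k y := lt_of_le_of_lt (Nat.zero_le J) hcase
          have hGk : G (k y + 1) ≤ ι y := hk_spec y hpos
          have h1 : fY Ys (k y) ≤ g (k y) := hJ (k y) (le_of_lt hcase)
          have h2 : g (k y) < G (k y + 1) := hGg (k y)
          omega
      intro i hik
      rw [hxl]
      exact hfY_spec Ys (k y) y hyY hagree i hik
    have hsub : Y \ {m | s x ≤ k m ∧ ∀ i ≤ k m, ((m ∈ u i) ↔ (x ∈ u i))} ⊆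
        ι ⁻¹' (Set.Iio N) := by
      rintro y ⟨hyY, hyC⟩
      by_contra hcon
      simp only [mem_preimage, mem_Iio, not_lt] at hcon
      exact hyC (hmain y hyY hcon)
    exact ((Set.finite_Iio N).preimage hι.injOn).subset hsub
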